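/- (Weyl inequality, lower form) Let H and V be N×N Hermitian complex matrices, and let λ↓_0(M) ≥ λ↓_1(M) ≥ … ≥ λ↓_{N−1}(M) denote eigenvalues in decreasing order with multiplicity. Then for all indices j, k with 0 ≤ j ≤ k ≤ N−1 such that j − k + N − 1 ≤ N − 1, one has λ↓_j(H+V) ≥ λ↓_k(H) + λ↓_{j−k+N−1}(V). -/

import Mathlib

/-!
Weyl's inequality is a dimension count followed by the Rayleigh quotient. Take the span `P` of
the eigenvectors of `H` for `λ↓_0(H), …, λ↓_k(H)`, the span `Q` of those of `V` for
`λ↓_0(V), …, λ↓_m(V)` with `m = j − k + N − 1`, and the span `R` of those of `H + V` for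
`λ↓_j(H+V), …, λ↓_{N−1}(H+V)`. Their dimensions add up to `2N + 1`, so some unit vector `x` lies
in all three, and then `λ↓_k(H) + λ↓_m(V) ≤ ⟪H x, x⟫ + ⟪V x, x⟫ = ⟪(H + V) x, x⟫ ≤ λ↓_j(H+V)`.
-/

open scoped Matrix.Norms.L2Operator

/-- The eigenvalues of a Hermitian matrix, listed in decreasing order (with multiplicity):
`sortedEigenvaluesDesc hA j` is `λ↓_j`. Out-of-range indices yield the junk value `0`. -/
noncomputable def Matrix.IsHermitian.sortedEigenvaluesDesc {n : Type*} [Fintype n] [DecidableEq n]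
    {A : Matrix n n ℂ} (hA : A.IsHermitian) (j : ℕ) : ℝ :=
  ((Finset.univ.val.map hA.eigenvalues).sort (· ≤ ·)).reverse.getD j 0

open Module RCLike
open scoped InnerProductSpace

namespace Submodule

variable {K V : Type*} [DivisionRing K] [AddCommGroup V] [Module K V] [FiniteDimensional K V]

theorem finrank_add_finrank_le_finrank_inf_add (s t : Submodule K V) :
    finrank K s + finrank K t ≤ finrank K ↥(s ⊓ t) + finrank K V := by
  rw [← finrank_sup_add_finrank_inf_eq s t, add_comm (finrank K ↥(s ⊔ t))]
  exact Nat.add_le_add_left (finrank_le _) _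

theorem inf_inf_ne_bot_of_two_mul_finrank_lt {s t u : Submodule K V}
    (h : 2 * finrank K V < finrank K s + finrank K t + finrank K u) : s ⊓ t ⊓ u ≠ ⊥ := by
  intro hbot
  have hst := finrank_add_finrank_le_finrank_inf_add s t
  have hstu := finrank_add_finrank_le_finrank_inf_add (s ⊓ t) u
  rw [hbot, finrank_bot] at hstu
  omega

end Submodule

namespace OrthonormalBasis

variable {ι 𝕜 E : Type*} [Fintype ι] [RCLike 𝕜] [NormedAddCommGroup E] [InnerProductSpace 𝕜 E]

theorem finrank_span_image (b : OrthonormalBasis ι 𝕜 E) (s : Finset ι) :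
    finrank 𝕜 (Submodule.span 𝕜 (b '' s)) = s.card := by
  rw [Set.image_eq_range]
  exact (finrank_span_eq_card
    (b.orthonormal.linearIndependent.comp ((↑) : s → ι) Subtype.val_injective)).trans (by simp)

theorem repr_eq_zero_of_mem_span_image (b : OrthonormalBasis ι 𝕜 E) {s : Set ι} {x : E}
    (hx : x ∈ Submodule.span 𝕜 (b '' s)) {i : ι} (hi : i ∉ s) : b.repr x i = 0 := by
  rw [← b.coe_toBasis, b.toBasis.mem_span_image] at hx
  rw [← b.coe_toBasis_repr_apply]
  by_contra h
  exact hi (hx (Finsupp.mem_support_iff.mpr h))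

end OrthonormalBasis

namespace LinearMap.IsSymmetric

variable {𝕜 E : Type*} [RCLike 𝕜] [NormedAddCommGroup E] [InnerProductSpace 𝕜 E]
  [FiniteDimensional 𝕜 E] {T : E →ₗ[𝕜] E} {n : ℕ}

theorem re_inner_apply_self_eq_sum (hT : T.IsSymmetric) (hn : finrank 𝕜 E = n) (x : E) :
    re ⟪T x, x⟫_𝕜 = ∑ i, hT.eigenvalues hn i * ‖(hT.eigenvectorBasis hn).repr x i‖ ^ 2 := by
  rw [← (hT.eigenvectorBasis hn).sum_inner_mul_inner, map_sum]
  congr 1 with i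
  rw [hT, apply_eigenvectorBasis, inner_smul_right, OrthonormalBasis.repr_apply_apply, mul_assoc,
    re_ofReal_mul, inner_mul_symm_re_eq_norm, norm_mul, norm_inner_symm, sq]

theorem le_re_inner_apply_self_of_mem_span (hT : T.IsSymmetric) (hn : finrank 𝕜 E = n)
    {s : Set (Fin n)} {c : ℝ} (hc : ∀ i ∈ s, c ≤ hT.eigenvalues hn i) {x : E}
    (hx : x ∈ Submodule.span 𝕜 (hT.eigenvectorBasis hn '' s)) :
    c * ‖x‖ ^ 2 ≤ re ⟪T x, x⟫_𝕜 := by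
  rw [re_inner_apply_self_eq_sum, ← (hT.eigenvectorBasis hn).sum_sq_norm_inner_right,
    Finset.mul_sum]
  refine Finset.sum_le_sum fun i _ => ?_
  rw [← OrthonormalBasis.repr_apply_apply]
  by_cases hi : i ∈ s
  · exact mul_le_mul_of_nonneg_right (hc i hi) (sq_nonneg _)
  · simp [(hT.eigenvectorBasis hn).repr_eq_zero_of_mem_span_image hx hi]

theorem re_inner_apply_self_le_of_mem_span (hT : T.IsSymmetric) (hn : finrank 𝕜 E = n)
    {s : Set (Fin n)} {c : ℝ} (hc : ∀ i ∈ s, hT.eigenvalues hn i ≤ c) {x : E}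
    (hx : x ∈ Submodule.span 𝕜 (hT.eigenvectorBasis hn '' s)) :
    re ⟪T x, x⟫_𝕜 ≤ c * ‖x‖ ^ 2 := by
  rw [re_inner_apply_self_eq_sum, ← (hT.eigenvectorBasis hn).sum_sq_norm_inner_right,
    Finset.mul_sum]
  refine Finset.sum_le_sum fun i _ => ?_
  rw [← OrthonormalBasis.repr_apply_apply]
  by_cases hi : i ∈ s
  · exact mul_le_mul_of_nonneg_right (hc i hi) (sq_nonneg _)
  · simp [(hT.eigenvectorBasis hn).repr_eq_zero_of_mem_span_image hx hi]

theorem eigenvalues_add_le_eigenvalues_add {S : E →ₗ[𝕜] E} (hT : T.IsSymmetric)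
    (hS : S.IsSymmetric) (hn : finrank 𝕜 E = n) {j k m : Fin n} (hjkm : n + j ≤ k + m + 1) :
    hT.eigenvalues hn k + hS.eigenvalues hn m ≤ (hT.add hS).eigenvalues hn j := by
  let P := Submodule.span 𝕜 (hT.eigenvectorBasis hn '' ↑(Finset.Iic k))
  let Q := Submodule.span 𝕜 (hS.eigenvectorBasis hn '' ↑(Finset.Iic m))
  let R := Submodule.span 𝕜 ((hT.add hS).eigenvectorBasis hn '' ↑(Finset.Ici j))
  have hdim : 2 * finrank 𝕜 E < finrank 𝕜 P + finrank 𝕜 Q + finrank 𝕜 R := by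
    simp only [P, Q, R, OrthonormalBasis.finrank_span_image, Fin.card_Iic, Fin.card_Ici]
    omega
  obtain ⟨x, ⟨⟨hxP, hxQ⟩, hxR⟩, hx0⟩ :=
    Submodule.exists_mem_ne_zero_of_ne_bot (Submodule.inf_inf_ne_bot_of_two_mul_finrank_lt hdim)
  have hTx := hT.le_re_inner_apply_self_of_mem_span hn
    (fun i hi => hT.eigenvalues_antitone hn (Finset.mem_Iic.mp hi)) hxP
  have hSx := hS.le_re_inner_apply_self_of_mem_span hn
    (fun i hi => hS.eigenvalues_antitone hn (Finset.mem_Iic.mp hi)) hxQ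
  have hTSx := (hT.add hS).re_inner_apply_self_le_of_mem_span hn
    (fun i hi => (hT.add hS).eigenvalues_antitone hn (Finset.mem_Ici.mp hi)) hxR
  rw [LinearMap.add_apply, inner_add_left, map_add] at hTSx
  have hx : 0 < ‖x‖ ^ 2 := by positivity
  nlinarith

end LinearMap.IsSymmetric

namespace Matrix.IsHermitian

variable {n : Type*} [Fintype n] [DecidableEq n]

theorem eigenvalues₀_add_le {𝕜 : Type*} [RCLike 𝕜] {A B : Matrix n n 𝕜} (hA : A.IsHermitian) (hB : B.IsHermitian)
    {j k m : Fin (Fintype.card n)} (hjkm : Fintype.card n + j ≤ k + m + 1) :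
    hA.eigenvalues₀ k + hB.eigenvalues₀ m ≤ (hA.add hB).eigenvalues₀ j := by
  have := (isSymmetric_toEuclideanLin_iff.mpr hA).eigenvalues_add_le_eigenvalues_add
    (isSymmetric_toEuclideanLin_iff.mpr hB) finrank_euclideanSpace hjkm
  simpa only [eigenvalues₀, map_add] using this

variable {A : Matrix n n ℂ}

theorem map_univ_eigenvalues (hA : A.IsHermitian) :
    Finset.univ.val.map hA.eigenvalues = Finset.univ.val.map hA.eigenvalues₀ := by
  unfold eigenvalues
  rw [← Function.comp_def, ← Multiset.map_map, Multiset.map_univ_val_equiv]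

theorem sortedEigenvaluesDesc_eq_getD (hA : A.IsHermitian) (j : ℕ) :
    hA.sortedEigenvaluesDesc j = (List.ofFn hA.eigenvalues₀).getD j 0 := by
  have hsorted : (List.ofFn hA.eigenvalues₀).reverse.Pairwise (· ≤ ·) :=
    List.pairwise_reverse.mpr
      (List.pairwise_ofFn.mpr fun _ _ hij => hA.eigenvalues₀_antitone hij.le)
  rw [sortedEigenvaluesDesc, map_univ_eigenvalues, Fin.univ_val_map, ← Multiset.coe_reverse,
    Multiset.coe_sort, List.mergeSort_of_pairwise (by simpa using hsorted), List.reverse_reverse]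

theorem sortedEigenvaluesDesc_of_lt (hA : A.IsHermitian) {j : ℕ} (hj : j < Fintype.card n) :
    hA.sortedEigenvaluesDesc j = hA.eigenvalues₀ ⟨j, hj⟩ := by
  rw [sortedEigenvaluesDesc_eq_getD, List.getD_eq_getElem _ _ (by simpa using hj),
    List.getElem_ofFn]

theorem sortedEigenvaluesDesc_of_card_le (hA : A.IsHermitian) {j : ℕ} (hj : Fintype.card n ≤ j) :
    hA.sortedEigenvaluesDesc j = 0 := by
  rw [sortedEigenvaluesDesc_eq_getD, List.getD_eq_default _ _ (by simpa using hj)]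

theorem sortedEigenvaluesDesc_add_le {B : Matrix n n ℂ} (hA : A.IsHermitian) (hB : B.IsHermitian)
    {j k m : ℕ} (hk : k < Fintype.card n) (hm : m < Fintype.card n)
    (hjkm : Fintype.card n + j ≤ k + m + 1) :
    hA.sortedEigenvaluesDesc k + hB.sortedEigenvaluesDesc m ≤
      (hA.add hB).sortedEigenvaluesDesc j := by
  have hj : j < Fintype.card n := by omega
  rw [sortedEigenvaluesDesc_of_lt hA hk, sortedEigenvaluesDesc_of_lt hB hm,
    sortedEigenvaluesDesc_of_lt (hA.add hB) hj]
  exact eigenvalues₀_add_le hA hB hjkm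

end Matrix.IsHermitian

/-- Weyl inequality (lower form): for Hermitian `H`, `V` and indices `0 ≤ j ≤ k ≤ N − 1`
(so that the integer `j − k + N − 1`, written below as `j + (N − 1) − k`, is at most `N − 1`),
`λ↓_j(H+V) ≥ λ↓_k(H) + λ↓_{j−k+N−1}(V)`. -/
theorem weyl_inequality_lower {N : ℕ} (H V : Matrix (Fin N) (Fin N) ℂ)
    (hH : H.IsHermitian) (hV : V.IsHermitian) :
    ∀ j k : ℕ, j ≤ k → k ≤ N - 1 → j + (N - 1) - k ≤ N - 1 →
      (hH.add hV).sortedEigenvaluesDesc j ≥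
        hH.sortedEigenvaluesDesc k + hV.sortedEigenvaluesDesc (j + (N - 1) - k) := by
  intro j k _ hkN hmN
  rcases N.eq_zero_or_pos with rfl | hN
  · simp [Matrix.IsHermitian.sortedEigenvaluesDesc_of_card_le]
  · exact hH.sortedEigenvaluesDesc_add_le hV (by rw [Fintype.card_fin]; omega)
      (by rw [Fintype.card_fin]; omega) (by rw [Fintype.card_fin]; omega)
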